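/- For p ≥ 1 and 0 ≤ i ≤ p, the composite map of pointed spaces S^p ≅ Δ^p/∂Δ^p → Σ(∂Δ^p) → Σ(∂Δ^p/sk_{p−2}Δ^p) → Σ S^{p−1} ≅ S^p, where the first map is the connecting map of the cofiber sequence ∂Δ^p → Δ^p → Δ^p/∂Δ^p and the last map is projection onto the i-th wedge summand of Σ(∂Δ^p/sk_{p−2}Δ^p) ≃ ⋁_{i=0}^{p} S^p, has degree (−1)^i. -/

import Mathlib

/-!
The connecting homomorphism sends the class of the top simplex `ι_{n+1}` of `Δ[n+1]/∂Δ[n+1]`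
to the class of its boundary `∑ⱼ (-1)ʲ dʲ ι_{n+1}`, which lives in `∂Δ[n+1]`. Modulo the
skeleton this cycle is `∑ⱼ (-1)ʲ uⱼ(ι_n)`, and `pr` kills every summand except the `i`-th.
-/

open CategoryTheory CategoryTheory.Limits SSet Simplicial Opposite
  AlgebraicTopology

/-- Simplicial chains with `ℤ`-coefficients, as a functor from simplicial sets
to chain complexes of abelian groups. -/
noncomputable def chainsFunctor : SSet ⥤ ChainComplex AddCommGrpCat ℕ :=
  (SimplicialObject.whiskering _ _).obj AddCommGrpCat.free ⋙
    alternatingFaceMapComplex AddCommGrpCat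

/- Mathlib computes connecting homomorphisms elementwise in concrete abelian categories
equipped with a forgetful functor to `Ab`; for `Ab` itself that functor is the identity. -/
noncomputable instance : HasForget₂ Ab Ab where
  forget₂ := 𝟭 Ab
  forget_comp := rfl

instance : (forget₂ Ab Ab).Additive := inferInstanceAs (𝟭 Ab).Additive

instance : (forget₂ Ab Ab).PreservesHomology := inferInstanceAs (𝟭 Ab).PreservesHomology

lemma AddCommGrpCat.sum_apply {A B : Ab} {ι : Type*} (s : Finset ι) (f : ι → (A ⟶ B))
    (x : A) : (∑ j ∈ s, f j) x = ∑ j ∈ s, f j x := by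
  rw [← homAddEquiv_apply, map_sum, AddMonoidHom.finsetSum_apply]
  rfl

lemma AddCommGrpCat.apply_sum_zsmul_of_comp_eq_ite {A B : Ab} {ι : Type*} [Fintype ι]
    [DecidableEq ι] (f : ι → (A ⟶ B)) (pr : B ⟶ A) (i : ι)
    (hpr : ∀ j, f j ≫ pr = if j = i then 𝟙 A else 0) (c : ι → ℤ) (a : A) :
    pr (∑ j, c j • f j a) = c i • a := by
  rw [map_sum]
  simp only [map_zsmul, ← ConcreteCategory.comp_apply, hpr]
  rw [Finset.sum_eq_single i (fun j _ hj => by simp [hj]) (by simp)]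
  simp

namespace HomologicalComplex

variable {ι : Type*} {c : ComplexShape ι}

lemma iCycles_injective (K : HomologicalComplex Ab c) (i : ι) :
    Function.Injective (K.iCycles i) :=
  (AddCommGrpCat.mono_iff_injective _).1 inferInstance

lemma homologyMap_homologyπ_apply {K L : HomologicalComplex Ab c} (φ : K ⟶ L) (i : ι)
    (z : K.cycles i) :
    homologyMap φ i (K.homologyπ i z) = L.homologyπ i (cyclesMap φ i z) := by
  rw [← ConcreteCategory.comp_apply, homologyπ_naturality, ConcreteCategory.comp_apply]

end HomologicalComplex

lemma CategoryTheory.ShortComplex.ShortExact.homologyMap_δ_apply {ι : Type*}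
    {c : ComplexShape ι} {S : ShortComplex (HomologicalComplex Ab c)} (hS : S.ShortExact)
    {i j : ι} (hij : c.Rel i j) {K : HomologicalComplex Ab c} (φ : S.X₁ ⟶ K)
    (z : S.X₃.cycles i) (x₂ : S.X₂.X i) (hx₂ : S.g.f i x₂ = S.X₃.iCycles i z)
    (x₁ : S.X₁.X j) (hx₁ : S.f.f j x₁ = S.X₂.d i j x₂)
    (w : K.cycles j) (hw : K.iCycles j w = φ.f j x₁) :
    HomologicalComplex.homologyMap φ j (hS.δ i j hij (S.X₃.homologyπ i z)) =
      K.homologyπ j w := by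
  have hz : S.X₃.d i j (S.X₃.iCycles i z) = 0 := by
    rw [← ConcreteCategory.comp_apply, HomologicalComplex.iCycles_d]; rfl
  have hz' : z = S.X₃.cyclesMk _ j (c.next_eq' hij) hz :=
    S.X₃.iCycles_injective i (S.X₃.i_cyclesMk _ j (c.next_eq' hij) hz).symm
  rw [hz', show hS.δ i j hij (S.X₃.homologyπ i _) = S.X₁.homologyπ j _ from
      hS.δ_apply i j hij _ hz x₂ hx₂ x₁ hx₁ _ rfl,
    HomologicalComplex.homologyMap_homologyπ_apply]
  congr 1
  apply K.iCycles_injective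
  rw [← ConcreteCategory.comp_apply, HomologicalComplex.cyclesMap_i,
    ConcreteCategory.comp_apply, hw]
  exact congrArg (φ.f j) (S.X₁.i_cyclesMk _ _ _ _)

lemma chainsFunctor_map_f_of {X Y : SSet} (φ : X ⟶ Y) (m : ℕ) (s : X _⦋m⦌) :
    (chainsFunctor.map φ).f m (FreeAbelianGroup.of s) =
      FreeAbelianGroup.of (φ.app (op ⦋m⦌) s) :=
  FreeAbelianGroup.map_of_apply s

lemma chainsFunctor_d_of (X : SSet) (m : ℕ) (s : X _⦋m + 1⦌) :
    (chainsFunctor.obj X).d (m + 1) m (FreeAbelianGroup.of s) =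
      ∑ j : Fin (m + 2), (-1 : ℤ) ^ (j : ℕ) • FreeAbelianGroup.of (X.δ j s) := by
  have hd : (chainsFunctor.obj X).d (m + 1) m = AlternatingFaceMapComplex.objD
      (((SimplicialObject.whiskering _ _).obj AddCommGrpCat.free).obj X) m :=
    alternatingFaceMapComplex_obj_d _ _
  rw [hd, AlternatingFaceMapComplex.objD]
  exact AddCommGrpCat.sum_apply _ _ _

lemma chainsFunctor_d_of_yonedaEquiv {X : SSet} {n : ℕ} (σ : Δ[n + 1] ⟶ X) :
    (chainsFunctor.obj X).d (n + 1) n (FreeAbelianGroup.of (SSet.yonedaEquiv σ)) =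
      ∑ j : Fin (n + 2), (-1 : ℤ) ^ (j : ℕ) •
        FreeAbelianGroup.of
          (SSet.yonedaEquiv (SSet.stdSimplex.map (SimplexCategory.δ j) ≫ σ)) := by
  simp only [chainsFunctor_d_of, SimplicialObject.δ, SSet.yonedaEquiv_naturality]
  rfl

theorem stmt10_general (n : ℕ) (i : Fin (n + 2))
    -- the (p−2)-skeleton of Δ[p] as a subcomplex of ∂Δ[p], p = n+1
    (sk : SSet) (skι : sk ⟶ ∂Δ[n + 1])
    -- the face inclusions dʲ : Δ[n] ⟶ ∂Δ[n+1]
    (bd : Fin (n + 2) → (Δ[n] ⟶ (∂Δ[n + 1] : SSet)))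
    (hbd : ∀ j, bd j ≫ (∂Δ[n + 1]).ι =
      SSet.stdSimplex.map (SimplexCategory.δ j))
    -- the short exact sequence `C(∂Δ[p]) ↪ C(Δ[p]) ↠ C(Δ[p])/C(∂Δ[p])`
    (hS : (ShortComplex.mk (chainsFunctor.map ((∂Δ[n + 1]).ι))
      (cokernel.π (chainsFunctor.map ((∂Δ[n + 1]).ι)))
      (cokernel.condition _)).ShortExact)
    -- the maps `C(Δ[n])/C(∂Δ[n]) ⟶ C(∂Δ[n+1])/C(sk)` induced by the faces
    (u : Fin (n + 2) → (cokernel (chainsFunctor.map ((∂Δ[n]).ι)) ⟶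
      cokernel (chainsFunctor.map skι)))
    (hu : ∀ j, cokernel.π (chainsFunctor.map ((∂Δ[n]).ι)) ≫ u j =
      chainsFunctor.map (bd j) ≫ cokernel.π (chainsFunctor.map skι))
    -- the projection onto the `i`-th wedge summand, on homology
    (pr : (cokernel (chainsFunctor.map skι)).homology n ⟶
      (cokernel (chainsFunctor.map ((∂Δ[n]).ι))).homology n)
    (hpr : ∀ j, HomologicalComplex.homologyMap (u j) n ≫ pr =
      if j = i then 𝟙 _ else 0)
    -- the canonical generator of `H_{n+1}(Δ[n+1]/∂Δ[n+1])`: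
    -- the class of the identity (n+1)-simplex
    (z₁ : ↥((cokernel (chainsFunctor.map ((∂Δ[n + 1]).ι))).cycles
      (n + 1)))
    (hz₁ : ((cokernel (chainsFunctor.map ((∂Δ[n + 1]).ι))).iCycles
        (n + 1)) z₁ =
      ((cokernel.π (chainsFunctor.map ((∂Δ[n + 1]).ι))).f (n + 1))
        (FreeAbelianGroup.of (yonedaEquiv (𝟙 Δ[n + 1]))))
    -- the canonical generator of `H_n(Δ[n]/∂Δ[n])`:
    -- the class of the identity n-simplex
    (z₃ : ↥((cokernel (chainsFunctor.map ((∂Δ[n]).ι))).cycles n))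
    (hz₃ : ((cokernel (chainsFunctor.map ((∂Δ[n]).ι))).iCycles n) z₃ =
      ((cokernel.π (chainsFunctor.map ((∂Δ[n]).ι))).f n)
        (FreeAbelianGroup.of (yonedaEquiv (𝟙 Δ[n])))) :
    -- the composite has degree (−1)^i
    (hS.δ (n + 1) n rfl ≫
      HomologicalComplex.homologyMap (cokernel.π (chainsFunctor.map skι)) n ≫
      pr)
      (((cokernel (chainsFunctor.map ((∂Δ[n + 1]).ι))).homologyπ
        (n + 1)) z₁) =
    ((-1 : ℤ) ^ (i : ℕ)) •
      (((cokernel (chainsFunctor.map ((∂Δ[n]).ι))).homologyπ n) z₃)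
      := by
  let x₁ : (chainsFunctor.obj ∂Δ[n + 1]).X n := ∑ j : Fin (n + 2), (-1 : ℤ) ^ (j : ℕ) •
    (chainsFunctor.map (bd j)).f n (FreeAbelianGroup.of (SSet.yonedaEquiv (𝟙 Δ[n])))
  have hx₁ : (chainsFunctor.map (∂Δ[n + 1]).ι).f n x₁ =
      (chainsFunctor.obj Δ[n + 1]).d (n + 1) n
        (FreeAbelianGroup.of (SSet.yonedaEquiv (𝟙 Δ[n + 1]))) := by
    rw [chainsFunctor_d_of_yonedaEquiv, map_sum]
    refine Finset.sum_congr rfl fun j _ => ?_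
    rw [map_zsmul]
    simp only [chainsFunctor_map_f_of, ← SSet.yonedaEquiv_comp, Category.id_comp, hbd,
      Category.comp_id]
    rfl
  have hw : (cokernel (chainsFunctor.map skι)).iCycles n
      (∑ j : Fin (n + 2), (-1 : ℤ) ^ (j : ℕ) • HomologicalComplex.cyclesMap (u j) n z₃) =
      (cokernel.π (chainsFunctor.map skι)).f n x₁ := by
    simp only [x₁, map_sum, map_zsmul]
    refine Finset.sum_congr rfl fun j _ => congrArg _ ?_
    rw [← ConcreteCategory.comp_apply, HomologicalComplex.cyclesMap_i,
      ConcreteCategory.comp_apply, hz₃]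
    exact ConcreteCategory.congr_hom (HomologicalComplex.congr_hom (hu j) n) _
  rw [ConcreteCategory.comp_apply, ConcreteCategory.comp_apply]
  refine (congrArg pr (hS.homologyMap_δ_apply _ _ z₁ _ hz₁.symm x₁ hx₁ _ hw)).trans ?_
  rw [map_sum]
  simp only [map_zsmul, ← HomologicalComplex.homologyMap_homologyπ_apply]
  exact AddCommGrpCat.apply_sum_zsmul_of_comp_eq_ite _ pr i hpr _ _

theorem stmt10 (n : ℕ) (i : Fin (n + 2))
    -- the (p−2)-skeleton of Δ[p] as a subcomplex of ∂Δ[p], p = n+1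
    (sk : SSet) (skι : sk ⟶ ∂Δ[n + 1]) (hmono : Mono skι)
    (hsk : ∀ (m : SimplexCategoryᵒᵖ) (x : (∂Δ[n + 1] : SSet).obj m),
      (∃ y, skι.app m y = x) ↔ Set.ncard (Set.range ⇑(stdSimplex.asOrderHom x.1)) ≤ n)
    -- the face inclusions dʲ : Δ[n] ⟶ ∂Δ[n+1]
    (bd : Fin (n + 2) → (Δ[n] ⟶ (∂Δ[n + 1] : SSet)))
    (hbd : ∀ j, bd j ≫ (∂Δ[n + 1]).ι =
      SSet.stdSimplex.map (SimplexCategory.δ j))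
    -- the short exact sequence `C(∂Δ[p]) ↪ C(Δ[p]) ↠ C(Δ[p])/C(∂Δ[p])`
    (hS : (ShortComplex.mk (chainsFunctor.map ((∂Δ[n + 1]).ι))
      (cokernel.π (chainsFunctor.map ((∂Δ[n + 1]).ι)))
      (cokernel.condition _)).ShortExact)
    -- the maps `C(Δ[n])/C(∂Δ[n]) ⟶ C(∂Δ[n+1])/C(sk)` induced by the faces
    (u : Fin (n + 2) → (cokernel (chainsFunctor.map ((∂Δ[n]).ι)) ⟶
      cokernel (chainsFunctor.map skι)))
    (hu : ∀ j, cokernel.π (chainsFunctor.map ((∂Δ[n]).ι)) ≫ u j =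
      chainsFunctor.map (bd j) ≫ cokernel.π (chainsFunctor.map skι))
    -- the projection onto the `i`-th wedge summand, on homology
    (pr : (cokernel (chainsFunctor.map skι)).homology n ⟶
      (cokernel (chainsFunctor.map ((∂Δ[n]).ι))).homology n)
    (hpr : ∀ j, HomologicalComplex.homologyMap (u j) n ≫ pr =
      if j = i then 𝟙 _ else 0)
    -- the canonical generator of `H_{n+1}(Δ[n+1]/∂Δ[n+1])`:
    -- the class of the identity (n+1)-simplex
    (z₁ : ↥((cokernel (chainsFunctor.map ((∂Δ[n + 1]).ι))).cycles
      (n + 1)))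
    (hz₁ : ((cokernel (chainsFunctor.map ((∂Δ[n + 1]).ι))).iCycles
        (n + 1)) z₁ =
      ((cokernel.π (chainsFunctor.map ((∂Δ[n + 1]).ι))).f (n + 1))
        (FreeAbelianGroup.of (yonedaEquiv (𝟙 Δ[n + 1]))))
    -- the canonical generator of `H_n(Δ[n]/∂Δ[n])`:
    -- the class of the identity n-simplex
    (z₃ : ↥((cokernel (chainsFunctor.map ((∂Δ[n]).ι))).cycles n))
    (hz₃ : ((cokernel (chainsFunctor.map ((∂Δ[n]).ι))).iCycles n) z₃ =
      ((cokernel.π (chainsFunctor.map ((∂Δ[n]).ι))).f n)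
        (FreeAbelianGroup.of (yonedaEquiv (𝟙 Δ[n])))) :
    -- the composite has degree (−1)^i
    (hS.δ (n + 1) n rfl ≫
      HomologicalComplex.homologyMap (cokernel.π (chainsFunctor.map skι)) n ≫
      pr)
      (((cokernel (chainsFunctor.map ((∂Δ[n + 1]).ι))).homologyπ
        (n + 1)) z₁) =
    ((-1 : ℤ) ^ (i : ℕ)) •
      (((cokernel (chainsFunctor.map ((∂Δ[n]).ι))).homologyπ n) z₃) :=
  stmt10_general n i sk skι bd hbd hS u hu pr hpr z₁ hz₁ z₃ hz₃
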